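/- Corollary 1: Let the system be i-IOSS with functions β ∈ 𝒦ℒ, γ₁, γ₂ ∈ 𝒦, let h be 𝒦-continuous, let W ⊆ (ℝ^q)^ℕ be an input set, let K be a sampling set, and let σ₁ ∈ ℒ; let Ψ be the set of quadruples (x₀₁, x₀₂, w₁, w₂) with w₁, w₂ ∈ W that do not generate a pair of i-ISS trajectories relative to (β, γ₁, σ₁). If there exist γ_w, γ_h ∈ 𝒦 and a finite time t* ∈ ℕ such that for all (x₀₁, x₀₂, w₁, w₂) ∈ Ψ, every K_i ∈ K, and all t ≥ t*: |Δh(Δx(t))| ≤ γ_h(sup_{τ∈K_i, τ<t} |Δh(Δx(τ))|) ⊕ γ_w(sup_{0≤τ<t} |Δw(τ)|), then the system is sample-based i-IOSS on W with respect to K. -/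

import Mathlib

open Set Filter

noncomputable section

/-- `Vec m` is `ℝ^m` with the Euclidean norm. -/
abbrev Vec (m : ℕ) := EuclideanSpace ℝ (Fin m)

/-- A function `φ : ℝ≥0 → ℝ≥0` is of class 𝒦 (modeled on `ℝ`, restricted to `[0,∞)`):
continuous, strictly increasing and `φ 0 = 0`. -/
def IsClassK (φ : ℝ → ℝ) : Prop :=
  ContinuousOn φ (Ici 0) ∧ StrictMonoOn φ (Ici 0) ∧ φ 0 = 0

/-- A function `σ : ℕ → ℝ≥0` is of class ℒ: non-increasing with limit `0`. -/
def IsClassL (σ : ℕ → ℝ) : Prop :=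
  (∀ t, 0 ≤ σ t) ∧ Antitone σ ∧ Tendsto σ atTop (nhds 0)

/-- Class 𝒦ℒ. -/
def IsClassKL (β : ℝ → ℕ → ℝ) : Prop :=
  (∀ t, IsClassK fun s => β s t) ∧ ∀ s, 0 ≤ s → IsClassL fun t => β s t

/-- Solution map of `x(t+1) = f(x(t), w(t))`, `x(0) = x₀`. -/
def sol {n q : ℕ} (f : Vec n → Vec q → Vec n) (x0 : Vec n) (w : ℕ → Vec q) : ℕ → Vec n
  | 0 => x0
  | t + 1 => f (sol f x0 w t) (w t)

/-- `|Δx(t)|`. -/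
def nDx {n q : ℕ} (f : Vec n → Vec q → Vec n) (x01 x02 : Vec n) (w1 w2 : ℕ → Vec q)
    (t : ℕ) : ℝ :=
  ‖sol f x01 w1 t - sol f x02 w2 t‖

/-- `|Δh(Δx(t))|`. -/
def nDy {n q p : ℕ} (f : Vec n → Vec q → Vec n) (h : Vec n → Vec p)
    (x01 x02 : Vec n) (w1 w2 : ℕ → Vec q) (t : ℕ) : ℝ :=
  ‖h (sol f x01 w1 t) - h (sol f x02 w2 t)‖

/-- `|Δw(t)|`. -/
def nDw {q : ℕ} (w1 w2 : ℕ → Vec q) (t : ℕ) : ℝ := ‖w1 t - w2 t‖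

/-- `sup_{0 ≤ τ < t} g τ` (empty sup is `0` by the `Real.sSup` convention). -/
def supLt (t : ℕ) (g : ℕ → ℝ) : ℝ := sSup (g '' {τ | τ < t})

/-- `sup_{τ ∈ S, τ < t} g τ`. -/
def supMem (S : Set ℕ) (t : ℕ) (g : ℕ → ℝ) : ℝ := sSup (g '' {τ | τ ∈ S ∧ τ < t})

/-- Time-discounted max over `0 ≤ τ < t` of `β (g τ) (t - τ - 1)`. -/
def dmaxLt (t : ℕ) (g : ℕ → ℝ) (β : ℝ → ℕ → ℝ) : ℝ :=
  sSup ((fun τ => β (g τ) (t - τ - 1)) '' {τ | τ < t})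

/-- Time-discounted max over `τ ∈ S, τ < t` of `β (g τ) (t - τ - 1)`. -/
def dmaxMem (S : Set ℕ) (t : ℕ) (g : ℕ → ℝ) (β : ℝ → ℕ → ℝ) : ℝ :=
  sSup ((fun τ => β (g τ) (t - τ - 1)) '' {τ | τ ∈ S ∧ τ < t})

/-- `t^i_j = δ_i + ⋯ + δ_{i+j-1}` (the sequence `δ` is 1-based; `δ 0` is unused). -/
def sampT (δ : ℕ → ℕ) (i j : ℕ) : ℕ := ∑ r ∈ Finset.range j, δ (i + r)

/-- The sampling set `K_i = {t^i_j : j ≥ 1}`. -/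
def sampSet (δ : ℕ → ℕ) (i : ℕ) : Set ℕ := {m | ∃ j, 1 ≤ j ∧ m = sampT δ i j}

/-- The i-IOSS bound with given comparison functions. -/
def iIOSSBound {n q p : ℕ} (f : Vec n → Vec q → Vec n) (h : Vec n → Vec p)
    (β : ℝ → ℕ → ℝ) (γ1 γ2 : ℝ → ℝ) : Prop :=
  ∀ x01 x02 w1 w2 t,
    nDx f x01 x02 w1 w2 t ≤
      max (β ‖x01 - x02‖ t)
        (max (γ1 (supLt t (nDw w1 w2))) (γ2 (supLt t (nDy f h x01 x02 w1 w2))))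

/-- The sample-based i-IOSS bound w.r.t. the sampling set generated by `δ`. -/
def sampledIOSSBound {n q p : ℕ} (f : Vec n → Vec q → Vec n) (h : Vec n → Vec p)
    (δ : ℕ → ℕ) (β : ℝ → ℕ → ℝ) (γ1 γ2 : ℝ → ℝ) : Prop :=
  ∀ i, 1 ≤ i → ∀ x01 x02 w1 w2 t,
    nDx f x01 x02 w1 w2 t ≤
      max (β ‖x01 - x02‖ t)
        (max (γ1 (supLt t (nDw w1 w2)))
             (γ2 (supMem (sampSet δ i) t (nDy f h x01 x02 w1 w2))))

/-- The sample-based i-IOSS bound on an input set `W`. -/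
def sampledIOSSBoundOn {n q p : ℕ} (f : Vec n → Vec q → Vec n) (h : Vec n → Vec p)
    (W : Set (ℕ → Vec q)) (δ : ℕ → ℕ) (β : ℝ → ℕ → ℝ) (γ1 γ2 : ℝ → ℝ) : Prop :=
  ∀ i, 1 ≤ i → ∀ x01 x02, ∀ w1 ∈ W, ∀ w2 ∈ W, ∀ t,
    nDx f x01 x02 w1 w2 t ≤
      max (β ‖x01 - x02‖ t)
        (max (γ1 (supLt t (nDw w1 w2)))
             (γ2 (supMem (sampSet δ i) t (nDy f h x01 x02 w1 w2))))

/-- The sample-based time-discounted i-IOSS bound. -/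
def sampledTDBound {n q p : ℕ} (f : Vec n → Vec q → Vec n) (h : Vec n → Vec p)
    (δ : ℕ → ℕ) (βx βu βy : ℝ → ℕ → ℝ) : Prop :=
  ∀ i, 1 ≤ i → ∀ x01 x02 w1 w2 t,
    nDx f x01 x02 w1 w2 t ≤
      max (βx ‖x01 - x02‖ t)
        (max (dmaxLt t (nDw w1 w2) βu)
             (dmaxMem (sampSet δ i) t (nDy f h x01 x02 w1 w2) βy))

/-- The sample-based time-discounted i-IOSS bound on an input set `W`. -/
def sampledTDBoundOn {n q p : ℕ} (f : Vec n → Vec q → Vec n) (h : Vec n → Vec p)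
    (W : Set (ℕ → Vec q)) (δ : ℕ → ℕ) (βx βu βy : ℝ → ℕ → ℝ) : Prop :=
  ∀ i, 1 ≤ i → ∀ x01 x02, ∀ w1 ∈ W, ∀ w2 ∈ W, ∀ t,
    nDx f x01 x02 w1 w2 t ≤
      max (βx ‖x01 - x02‖ t)
        (max (dmaxLt t (nDw w1 w2) βu)
             (dmaxMem (sampSet δ i) t (nDy f h x01 x02 w1 w2) βy))

/-- `(x₀₁, x₀₂, w₁, w₂)` generates a pair of i-ISS trajectories relative to `(β, γ1, σ1)`. -/
def pairISS {n q : ℕ} (f : Vec n → Vec q → Vec n) (β : ℝ → ℕ → ℝ) (γ1 : ℝ → ℝ)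
    (σ1 : ℕ → ℝ) (x01 x02 : Vec n) (w1 w2 : ℕ → Vec q) : Prop :=
  ∀ t, nDx f x01 x02 w1 w2 t ≤
    max (β ‖x01 - x02‖ t)
      (sSup ((fun τ => γ1 (nDw w1 w2 τ) * σ1 (t - τ - 1)) '' {τ | τ < t}))

/-
On the quadruples that generate a pair of i-ISS trajectories, the i-ISS estimate is already a
sample-based bound. On the remaining ones, every output difference from time `t*` on is
dominated by the sampled output differences and the disturbance. Before `t*`, iterating the
i-IOSS bound together with `|Δh| ≤ α_h(|Δx|)` `t*` times gives a class-𝒦 bound on `|Δx|` in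
terms of `|Δx₀| ⊕ sup |Δw|`; restarting the i-IOSS bound at time `t*` then only involves
outputs at times `≥ t*`. The non-decaying bound on `[0, t*)` is absorbed into a delayed
𝒦ℒ function.
-/

section Sup

variable {g : ℕ → ℝ} {S : Set ℕ} {t τ : ℕ} {a : ℝ}

lemma le_supLt (h : τ < t) : g τ ≤ supLt t g :=
  le_csSup ((finite_Iio t).image g).bddAbove ⟨τ, h, rfl⟩

lemma supLt_le (ha : 0 ≤ a) (h : ∀ τ < t, g τ ≤ a) : supLt t g ≤ a :=
  Real.sSup_le (by rintro _ ⟨τ, hτ, rfl⟩; exact h τ hτ) ha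

lemma supLt_nonneg (hg : ∀ τ, 0 ≤ g τ) (t : ℕ) : 0 ≤ supLt t g :=
  Real.sSup_nonneg (by rintro _ ⟨τ, -, rfl⟩; exact hg τ)

lemma supLt_mono (hg : ∀ τ, 0 ≤ g τ) {t₁ t₂ : ℕ} (h : t₁ ≤ t₂) : supLt t₁ g ≤ supLt t₂ g :=
  supLt_le (supLt_nonneg hg t₂) fun _ hτ => le_supLt (hτ.trans_le h)

lemma supMem_nonneg (hg : ∀ τ, 0 ≤ g τ) (S : Set ℕ) (t : ℕ) : 0 ≤ supMem S t g :=
  Real.sSup_nonneg (by rintro _ ⟨τ, -, rfl⟩; exact hg τ)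

lemma supMem_mono (hg : ∀ τ, 0 ≤ g τ) {t₁ t₂ : ℕ} (h : t₁ ≤ t₂) :
    supMem S t₁ g ≤ supMem S t₂ g := by
  have hbdd : BddAbove (g '' {τ | τ ∈ S ∧ τ < t₂}) :=
    (((finite_Iio t₂).subset fun _ hτ => hτ.2).image g).bddAbove
  refine Real.sSup_le ?_ (supMem_nonneg hg S t₂)
  rintro _ ⟨τ, ⟨hS, hτ⟩, rfl⟩
  exact le_csSup hbdd ⟨τ, ⟨hS, hτ.trans_le h⟩, rfl⟩

end Sup

namespace IsClassK

variable {φ ψ : ℝ → ℝ} {x y : ℝ}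

lemma mono (hφ : IsClassK φ) (hx : 0 ≤ x) (hxy : x ≤ y) : φ x ≤ φ y :=
  hφ.2.1.monotoneOn hx (hx.trans hxy) hxy

lemma nonneg (hφ : IsClassK φ) (hx : 0 ≤ x) : 0 ≤ φ x :=
  hφ.2.2 ▸ hφ.mono le_rfl hx

lemma map_max (hφ : IsClassK φ) (hx : 0 ≤ x) (hy : 0 ≤ y) : φ (max x y) = max (φ x) (φ y) :=
  hφ.2.1.monotoneOn.map_max hx hy

lemma mapsTo (hφ : IsClassK φ) : MapsTo φ (Ici 0) (Ici 0) :=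
  fun _ hx => hφ.nonneg hx

protected lemma id : IsClassK fun s => s :=
  ⟨continuousOn_id, strictMonoOn_id, rfl⟩

lemma comp (hφ : IsClassK φ) (hψ : IsClassK ψ) : IsClassK fun s => φ (ψ s) :=
  ⟨hφ.1.comp hψ.1 hψ.mapsTo, hφ.2.1.comp hψ.2.1 hψ.mapsTo, by simp only [hψ.2.2, hφ.2.2]⟩

protected lemma max (hφ : IsClassK φ) (hψ : IsClassK ψ) : IsClassK fun s => max (φ s) (ψ s) :=
  ⟨hφ.1.sup hψ.1,
    fun _ hx _ hy hxy => max_lt (lt_max_of_lt_left (hφ.2.1 hx hy hxy))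
      (lt_max_of_lt_right (hψ.2.1 hx hy hxy)),
    by simp only [hφ.2.2, hψ.2.2, max_self]⟩

protected lemma add (hφ : IsClassK φ) (hψ : IsClassK ψ) : IsClassK fun s => φ s + ψ s :=
  ⟨hφ.1.add hψ.1, fun _ hx _ hy hxy => add_lt_add (hφ.2.1 hx hy hxy) (hψ.2.1 hx hy hxy),
    by simp only [hφ.2.2, hψ.2.2, add_zero]⟩

lemma const_mul (hφ : IsClassK φ) {c : ℝ} (hc : 0 < c) : IsClassK fun s => c * φ s :=
  ⟨continuousOn_const.mul hφ.1, fun _ hx _ hy hxy => mul_lt_mul_of_pos_left (hφ.2.1 hx hy hxy) hc,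
    by simp only [hφ.2.2, mul_zero]⟩

end IsClassK

namespace IsClassKL

variable {β : ℝ → ℕ → ℝ} {x y : ℝ}

lemma mono (hβ : IsClassKL β) (hx : 0 ≤ x) (hxy : x ≤ y) (t : ℕ) : β x t ≤ β y t :=
  (hβ.1 t).mono hx hxy

lemma nonneg (hβ : IsClassKL β) (hx : 0 ≤ x) (t : ℕ) : 0 ≤ β x t :=
  (hβ.1 t).nonneg hx

lemma anti (hβ : IsClassKL β) (hx : 0 ≤ x) {t₁ t₂ : ℕ} (ht : t₁ ≤ t₂) : β x t₂ ≤ β x t₁ :=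
  (hβ.2 x hx).2.1 ht

end IsClassKL

def delayedKL (β : ℝ → ℕ → ℝ) (M : ℝ → ℝ) (T : ℕ) : ℝ → ℕ → ℝ :=
  fun s t => β (M s) (t - T) + if t < T then M s else 0

lemma IsClassKL.delayed {β : ℝ → ℕ → ℝ} {M : ℝ → ℝ} (hβ : IsClassKL β) (hM : IsClassK M)
    (T : ℕ) : IsClassKL (delayedKL β M T) := by
  refine ⟨fun t => ?_, fun s hs => ⟨fun t => ?_, fun t₁ t₂ ht => ?_, ?_⟩⟩
  · by_cases htT : t < T
    · simpa only [delayedKL, if_pos htT] using ((hβ.1 (t - T)).comp hM).add hM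
    · simpa only [delayedKL, if_neg htT, add_zero] using (hβ.1 (t - T)).comp hM
  · refine add_nonneg (hβ.nonneg (hM.nonneg hs) _) ?_
    split_ifs
    exacts [hM.nonneg hs, le_rfl]
  · refine add_le_add (hβ.anti (hM.nonneg hs) (Nat.sub_le_sub_right ht T)) ?_
    by_cases h₂ : t₂ < T
    · rw [if_pos h₂, if_pos (ht.trans_lt h₂)]
    · rw [if_neg h₂]
      split_ifs
      exacts [hM.nonneg hs, le_rfl]
  · have hdecay := (hβ.2 (M s) (hM.nonneg hs)).2.2.comp (tendsto_sub_atTop_nat T)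
    have hvanish : (fun t => if t < T then M s else 0) =ᶠ[atTop] fun _ => 0 :=
      (eventually_ge_atTop T).mono fun t ht => if_neg (not_lt.2 ht)
    simpa [delayedKL] using hdecay.add (tendsto_const_nhds.congr' hvanish.symm)

section Trajectories

variable {n q p : ℕ} {f : Vec n → Vec q → Vec n} {h : Vec n → Vec p}
  {β : ℝ → ℕ → ℝ} {γ1 γ2 αh : ℝ → ℝ}

lemma sol_add (f : Vec n → Vec q → Vec n) (x0 : Vec n) (w : ℕ → Vec q) (s : ℕ) :
    ∀ t, sol f x0 w (s + t) = sol f (sol f x0 w s) (fun r => w (s + r)) t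
  | 0 => rfl
  | t + 1 => by rw [← Nat.add_assoc, sol, sol, sol_add f x0 w s t]

lemma iIOSSBound.nDx_le_of_restart (hIOSS : iIOSSBound f h β γ1 γ2) (hγ1 : IsClassK γ1)
    (hγ2 : IsClassK γ2) (x01 x02 : Vec n) (w1 w2 : ℕ → Vec q) {T t : ℕ} (hTt : T ≤ t) {a : ℝ}
    (ha : 0 ≤ a) (hY : ∀ τ, T ≤ τ → τ < t → nDy f h x01 x02 w1 w2 τ ≤ a) :
    nDx f x01 x02 w1 w2 t ≤ max (β (nDx f x01 x02 w1 w2 T) (t - T))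
      (max (γ1 (supLt t (nDw w1 w2))) (γ2 a)) := by
  obtain ⟨d, rfl⟩ := Nat.exists_eq_add_of_le hTt
  have hrestart := hIOSS (sol f x01 w1 T) (sol f x02 w2 T) (fun r => w1 (T + r))
    (fun r => w2 (T + r)) d
  simp only [nDx, ← sol_add] at hrestart
  rw [Nat.add_sub_cancel_left]
  refine hrestart.trans (max_le_max le_rfl (max_le_max ?_ ?_))
  · exact hγ1.mono (supLt_nonneg (fun _ => norm_nonneg _) d)
      (supLt_le (supLt_nonneg (fun _ => norm_nonneg _) _)
        fun τ hτ => le_supLt (g := nDw w1 w2) (τ := T + τ) (by omega))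
  · exact hγ2.mono (supLt_nonneg (fun _ => norm_nonneg _) d)
      (supLt_le ha fun τ hτ => by
        simpa only [nDy, sol_add] using hY (T + τ) (by omega) (by omega))

def stateBound (β : ℝ → ℕ → ℝ) (γ1 γ2 αh : ℝ → ℝ) : ℕ → ℝ → ℝ
  | 0 => fun r => r
  | k + 1 => fun r => max (stateBound β γ1 γ2 αh k r)
      (max (β r 0) (max (γ1 r) (γ2 (αh (stateBound β γ1 γ2 αh k r)))))

lemma stateBound_classK (hβ : IsClassKL β) (hγ1 : IsClassK γ1) (hγ2 : IsClassK γ2)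
    (hαh : IsClassK αh) : ∀ k, IsClassK (stateBound β γ1 γ2 αh k)
  | 0 => IsClassK.id
  | k + 1 =>
    have hk := stateBound_classK hβ hγ1 hγ2 hαh k
    hk.max ((hβ.1 0).max (hγ1.max (hγ2.comp (hαh.comp hk))))

lemma le_stateBound (r : ℝ) : ∀ k, r ≤ stateBound β γ1 γ2 αh k r
  | 0 => le_rfl
  | k + 1 => (le_stateBound r k).trans (le_max_left _ _)

lemma nDx_le_stateBound (hIOSS : iIOSSBound f h β γ1 γ2) (hβ : IsClassKL β)
    (hγ1 : IsClassK γ1) (hγ2 : IsClassK γ2) (hαh : IsClassK αh)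
    (hKcont : ∀ x1 x2 : Vec n, ‖h x1 - h x2‖ ≤ αh ‖x1 - x2‖)
    {x01 x02 : Vec n} {w1 w2 : ℕ → Vec q} {r : ℝ} (hs : ‖x01 - x02‖ ≤ r) :
    ∀ k τ, τ ≤ k → (∀ τ' < τ, nDw w1 w2 τ' ≤ r) →
      nDx f x01 x02 w1 w2 τ ≤ stateBound β γ1 γ2 αh k r := by
  have hr : 0 ≤ r := (norm_nonneg _).trans hs
  intro k
  induction k with
  | zero =>
    intro τ hτ _
    obtain rfl : τ = 0 := by omega
    exact hs
  | succ k ih =>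
    intro τ hτ hw
    have hY : supLt τ (nDy f h x01 x02 w1 w2) ≤ αh (stateBound β γ1 γ2 αh k r) :=
      supLt_le (hαh.nonneg (hr.trans (le_stateBound r k))) fun τ' hτ' =>
        (hKcont _ _).trans (hαh.mono (norm_nonneg _)
          (ih τ' (by omega) fun τ'' hτ'' => hw τ'' (by omega)))
    have hW : supLt τ (nDw w1 w2) ≤ r := supLt_le hr hw
    calc nDx f x01 x02 w1 w2 τ
        ≤ max (β ‖x01 - x02‖ τ) (max (γ1 (supLt τ (nDw w1 w2)))
            (γ2 (supLt τ (nDy f h x01 x02 w1 w2)))) := hIOSS _ _ _ _ τ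
      _ ≤ max (β r 0) (max (γ1 r) (γ2 (αh (stateBound β γ1 γ2 αh k r)))) :=
          max_le_max ((hβ.anti (norm_nonneg _) τ.zero_le).trans (hβ.mono (norm_nonneg _) hs 0))
            (max_le_max (hγ1.mono (supLt_nonneg (fun _ => norm_nonneg _) τ) hW)
              (hγ2.mono (supLt_nonneg (fun _ => norm_nonneg _) τ) hY))
      _ ≤ stateBound β γ1 γ2 αh (k + 1) r := le_max_right _ _

lemma nDx_le_max_stateBound (hIOSS : iIOSSBound f h β γ1 γ2) (hβ : IsClassKL β)
    (hγ1 : IsClassK γ1) (hγ2 : IsClassK γ2) (hαh : IsClassK αh)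
    (hKcont : ∀ x1 x2 : Vec n, ‖h x1 - h x2‖ ≤ αh ‖x1 - x2‖)
    {x01 x02 : Vec n} {w1 w2 : ℕ → Vec q} {T t τ : ℕ} (hτT : τ ≤ T) (hτt : τ ≤ t) :
    nDx f x01 x02 w1 w2 τ ≤ max (stateBound β γ1 γ2 αh T ‖x01 - x02‖)
      (stateBound β γ1 γ2 αh T (supLt t (nDw w1 w2))) := by
  rw [← (stateBound_classK hβ hγ1 hγ2 hαh T).map_max (norm_nonneg _)
    (supLt_nonneg (g := nDw w1 w2) (fun _ => norm_nonneg _) t)]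
  exact nDx_le_stateBound hIOSS hβ hγ1 hγ2 hαh hKcont (le_max_left _ _) T τ hτT
    fun τ' hτ' => (le_supLt (by omega)).trans (le_max_right _ _)

end Trajectories

section SampleBased

variable {n q p : ℕ} {f : Vec n → Vec q → Vec n} {h : Vec n → Vec p}
  {β : ℝ → ℕ → ℝ} {γ1 γ2 αh γw γh : ℝ → ℝ} {σ1 : ℕ → ℝ} {M : ℝ → ℝ}
  {x01 x02 : Vec n} {w1 w2 : ℕ → Vec q}

lemma pairISS.nDx_le (hISS : pairISS f β γ1 σ1 x01 x02 w1 w2) (hγ1 : IsClassK γ1)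
    (hσ1 : IsClassL σ1) (t : ℕ) :
    nDx f x01 x02 w1 w2 t ≤ max (β ‖x01 - x02‖ t) (σ1 0 * γ1 (supLt t (nDw w1 w2))) := by
  have hγ1W : 0 ≤ γ1 (supLt t (nDw w1 w2)) := hγ1.nonneg (supLt_nonneg (fun _ => norm_nonneg _) t)
  refine (hISS t).trans (max_le_max le_rfl (Real.sSup_le ?_ (mul_nonneg (hσ1.1 0) hγ1W)))
  rintro _ ⟨τ, hτ, rfl⟩
  rw [mul_comm (σ1 0)]
  exact mul_le_mul (hγ1.mono (norm_nonneg _) (le_supLt hτ)) (hσ1.2.1 (Nat.zero_le _)) (hσ1.1 _)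
    hγ1W

lemma nDx_le_of_sampled_output_bound (hIOSS : iIOSSBound f h β γ1 γ2) (hβ : IsClassKL β)
    (hγ1 : IsClassK γ1) (hγ2 : IsClassK γ2) (hαh : IsClassK αh) (hγw : IsClassK γw)
    (hγh : IsClassK γh) (hKcont : ∀ x1 x2 : Vec n, ‖h x1 - h x2‖ ≤ αh ‖x1 - x2‖)
    {S : Set ℕ} {T t : ℕ} (hTt : T ≤ t)
    (hout : ∀ τ, T ≤ τ → nDy f h x01 x02 w1 w2 τ ≤
      max (γh (supMem S τ (nDy f h x01 x02 w1 w2))) (γw (supLt τ (nDw w1 w2)))) :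
    let M := stateBound β γ1 γ2 αh T
    let W := supLt t (nDw w1 w2)
    let Y := supMem S t (nDy f h x01 x02 w1 w2)
    nDx f x01 x02 w1 w2 t ≤ max (max (β (M ‖x01 - x02‖) (t - T)) (β (M W) 0))
      (max (γ1 W) (max (γ2 (γh Y)) (γ2 (γw W)))) := by
  intro M W Y
  have hM : IsClassK M := stateBound_classK hβ hγ1 hγ2 hαh T
  have hW : 0 ≤ W := supLt_nonneg (fun _ => norm_nonneg _) t
  have hY : 0 ≤ Y := supMem_nonneg (fun _ => norm_nonneg _) S t
  have hXT : nDx f x01 x02 w1 w2 T ≤ max (M ‖x01 - x02‖) (M W) :=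
    nDx_le_max_stateBound hIOSS hβ hγ1 hγ2 hαh hKcont le_rfl hTt
  have hYτ : ∀ τ, T ≤ τ → τ < t → nDy f h x01 x02 w1 w2 τ ≤ max (γh Y) (γw W) :=
    fun τ hTτ hτt => (hout τ hTτ).trans (max_le_max
      (hγh.mono (supMem_nonneg (fun _ => norm_nonneg _) S τ)
        (supMem_mono (fun _ => norm_nonneg _) hτt.le))
      (hγw.mono (supLt_nonneg (fun _ => norm_nonneg _) τ)
        (supLt_mono (fun _ => norm_nonneg _) hτt.le)))
  have hMs : 0 ≤ M ‖x01 - x02‖ := hM.nonneg (norm_nonneg _)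
  have hMW : 0 ≤ M W := hM.nonneg hW
  calc nDx f x01 x02 w1 w2 t
      ≤ max (β (nDx f x01 x02 w1 w2 T) (t - T)) (max (γ1 W) (γ2 (max (γh Y) (γw W)))) :=
        hIOSS.nDx_le_of_restart hγ1 hγ2 x01 x02 w1 w2 hTt
          (le_max_of_le_right (hγw.nonneg hW)) hYτ
    _ ≤ max (max (β (M ‖x01 - x02‖) (t - T)) (β (M W) (t - T)))
          (max (γ1 W) (max (γ2 (γh Y)) (γ2 (γw W)))) := by
        rw [← (hβ.1 (t - T)).map_max hMs hMW, ← hγ2.map_max (hγh.nonneg hY) (hγw.nonneg hW)]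
        exact max_le_max (hβ.mono (norm_nonneg _) hXT _) le_rfl
    _ ≤ _ := max_le_max (max_le_max le_rfl (hβ.anti hMW (Nat.zero_le _))) le_rfl

-- The factor `1 + σ1 0` (not `σ1 0`, which may vanish) keeps the gain of class 𝒦.
def sampledInputGain (β : ℝ → ℕ → ℝ) (γ1 γ2 γw : ℝ → ℝ) (σ1 : ℕ → ℝ) (M : ℝ → ℝ) : ℝ → ℝ :=
  fun w => max (M w) (max (β (M w) 0) (max (γ2 (γw w)) ((1 + σ1 0) * γ1 w)))

lemma sampledInputGain_classK (hβ : IsClassKL β) (hγ1 : IsClassK γ1) (hγ2 : IsClassK γ2)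
    (hγw : IsClassK γw) (hσ1 : IsClassL σ1) (hM : IsClassK M) :
    IsClassK (sampledInputGain β γ1 γ2 γw σ1 M) :=
  hM.max (((hβ.1 0).comp hM).max
    ((hγ2.comp hγw).max (hγ1.const_mul (by linarith [hσ1.1 0]))))

lemma nDx_le_sampled (hIOSS : iIOSSBound f h β γ1 γ2) (hβ : IsClassKL β) (hγ1 : IsClassK γ1)
    (hγ2 : IsClassK γ2) (hαh : IsClassK αh) (hγw : IsClassK γw) (hγh : IsClassK γh)
    (hσ1 : IsClassL σ1) (hKcont : ∀ x1 x2 : Vec n, ‖h x1 - h x2‖ ≤ αh ‖x1 - x2‖)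
    {S : Set ℕ} {T : ℕ}
    (hout : ¬ pairISS f β γ1 σ1 x01 x02 w1 w2 → ∀ τ, T ≤ τ → nDy f h x01 x02 w1 w2 τ ≤
      max (γh (supMem S τ (nDy f h x01 x02 w1 w2))) (γw (supLt τ (nDw w1 w2)))) (t : ℕ) :
    let M := stateBound β γ1 γ2 αh T
    nDx f x01 x02 w1 w2 t ≤ max (delayedKL β M T ‖x01 - x02‖ t)
      (max (sampledInputGain β γ1 γ2 γw σ1 M (supLt t (nDw w1 w2)))
        (γ2 (γh (supMem S t (nDy f h x01 x02 w1 w2))))) := by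
  intro M
  set W := supLt t (nDw w1 w2)
  have hM : IsClassK M := stateBound_classK hβ hγ1 hγ2 hαh T
  have hW : 0 ≤ W := supLt_nonneg (fun _ => norm_nonneg _) t
  have hMs : 0 ≤ M ‖x01 - x02‖ := hM.nonneg (norm_nonneg _)
  have hσγ1 : max (γ1 W) (σ1 0 * γ1 W) ≤ (1 + σ1 0) * γ1 W :=
    max_le (le_mul_of_one_le_left (hγ1.nonneg hW) (by linarith [hσ1.1 0]))
      (mul_le_mul_of_nonneg_right (by linarith) (hγ1.nonneg hW))
  rcases lt_or_ge t T with htT | hTt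
  · have hβ' : M ‖x01 - x02‖ ≤ delayedKL β M T ‖x01 - x02‖ t := by
      simp only [delayedKL, if_pos htT]
      exact le_add_of_nonneg_left (hβ.nonneg hMs _)
    exact (nDx_le_max_stateBound hIOSS hβ hγ1 hγ2 hαh hKcont htT.le le_rfl).trans
      (max_le_max hβ' (le_max_of_le_left (le_max_left _ _)))
  have hβ' : β (M ‖x01 - x02‖) (t - T) ≤ delayedKL β M T ‖x01 - x02‖ t :=
    le_add_of_nonneg_right (by rw [if_neg (not_lt.2 hTt)])
  by_cases hISS : pairISS f β γ1 σ1 x01 x02 w1 w2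
  · refine (hISS.nDx_le hγ1 hσ1 t).trans (max_le_max ?_ (le_max_of_le_left ?_))
    · exact (hβ.anti (norm_nonneg _) (Nat.sub_le t T)).trans
        ((hβ.mono (norm_nonneg _) (le_stateBound _ T) _).trans hβ')
    · exact le_max_of_le_right (le_max_of_le_right (le_max_of_le_right
        ((le_max_right _ _).trans hσγ1)))
  · refine (nDx_le_of_sampled_output_bound hIOSS hβ hγ1 hγ2 hαh hγw hγh hKcont hTt
      (hout hISS)).trans (max_le (max_le (le_max_of_le_left hβ') ?_) (max_le ?_ ?_))
    · exact le_max_of_le_right (le_max_of_le_left (le_max_of_le_right (le_max_left _ _)))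
    · exact le_max_of_le_right (le_max_of_le_left (le_max_of_le_right (le_max_of_le_right
        (le_max_of_le_right ((le_max_left _ _).trans hσγ1)))))
    · exact max_le (le_max_of_le_right (le_max_right _ _)) (le_max_of_le_right
        (le_max_of_le_left (le_max_of_le_right (le_max_of_le_right (le_max_left _ _)))))

end SampleBased

theorem corollary1_sample_based_iIOSS_on_W_general {n q p : ℕ}
    (f : Vec n → Vec q → Vec n) (h : Vec n → Vec p)
    (β : ℝ → ℕ → ℝ) (γ1 γ2 : ℝ → ℝ)
    (hβ : IsClassKL β) (hγ1 : IsClassK γ1) (hγ2 : IsClassK γ2)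
    (hiIOSS : iIOSSBound f h β γ1 γ2)
    (αh : ℝ → ℝ) (hαh : IsClassK αh)
    (hKcont : ∀ x1 x2 : Vec n, ‖h x1 - h x2‖ ≤ αh ‖x1 - x2‖)
    (W : Set (ℕ → Vec q))
    (δ : ℕ → ℕ)
    (σ1 : ℕ → ℝ) (hσ1 : IsClassL σ1)
    (γw γh : ℝ → ℝ) (tstar : ℕ) (hγw : IsClassK γw) (hγh : IsClassK γh)
    (hcond : ∀ (x01 x02 : Vec n) (w1 w2 : ℕ → Vec q), w1 ∈ W → w2 ∈ W →
        ¬ pairISS f β γ1 σ1 x01 x02 w1 w2 →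
        ∀ i, 1 ≤ i → ∀ t, tstar ≤ t →
          nDy f h x01 x02 w1 w2 t ≤
            max (γh (supMem (sampSet δ i) t (nDy f h x01 x02 w1 w2)))
                (γw (supLt t (nDw w1 w2)))) :
    ∃ (β' : ℝ → ℕ → ℝ) (γ1' γ2' : ℝ → ℝ),
      IsClassKL β' ∧ IsClassK γ1' ∧ IsClassK γ2' ∧
        sampledIOSSBoundOn f h W δ β' γ1' γ2' := by
  have hM := stateBound_classK hβ hγ1 hγ2 hαh tstar
  refine ⟨delayedKL β (stateBound β γ1 γ2 αh tstar) tstar,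
    sampledInputGain β γ1 γ2 γw σ1 (stateBound β γ1 γ2 αh tstar), fun y => γ2 (γh y),
    hβ.delayed hM tstar, sampledInputGain_classK hβ hγ1 hγ2 hγw hσ1 hM, hγ2.comp hγh, ?_⟩
  intro i hi x01 x02 w1 hw1 w2 hw2 t
  exact nDx_le_sampled hiIOSS hβ hγ1 hγ2 hαh hγw hγh hσ1 hKcont
    (fun hISS τ hτ => hcond x01 x02 w1 w2 hw1 hw2 hISS i hi τ hτ) t

/-- **Corollary 1**. -/
theorem corollary1_sample_based_iIOSS_on_W {n q p : ℕ}
    (f : Vec n → Vec q → Vec n) (h : Vec n → Vec p)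
    (β : ℝ → ℕ → ℝ) (γ1 γ2 : ℝ → ℝ)
    (hβ : IsClassKL β) (hγ1 : IsClassK γ1) (hγ2 : IsClassK γ2)
    (hiIOSS : iIOSSBound f h β γ1 γ2)
    (αh : ℝ → ℝ) (hαh : IsClassK αh)
    (hKcont : ∀ x1 x2 : Vec n, ‖h x1 - h x2‖ ≤ αh ‖x1 - x2‖)
    (W : Set (ℕ → Vec q))
    (δ : ℕ → ℕ) (δmax : ℕ) (hδ : ∀ i, 1 ≤ i → δ i ≤ δmax)
    (σ1 : ℕ → ℝ) (hσ1 : IsClassL σ1)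
    (γw γh : ℝ → ℝ) (tstar : ℕ) (hγw : IsClassK γw) (hγh : IsClassK γh)
    (hcond : ∀ (x01 x02 : Vec n) (w1 w2 : ℕ → Vec q), w1 ∈ W → w2 ∈ W →
        ¬ pairISS f β γ1 σ1 x01 x02 w1 w2 →
        ∀ i, 1 ≤ i → ∀ t, tstar ≤ t →
          nDy f h x01 x02 w1 w2 t ≤
            max (γh (supMem (sampSet δ i) t (nDy f h x01 x02 w1 w2)))
                (γw (supLt t (nDw w1 w2)))) :
    ∃ (β' : ℝ → ℕ → ℝ) (γ1' γ2' : ℝ → ℝ),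
      IsClassKL β' ∧ IsClassK γ1' ∧ IsClassK γ2' ∧
        sampledIOSSBoundOn f h W δ β' γ1' γ2' :=
  corollary1_sample_based_iIOSS_on_W_general f h β γ1 γ2 hβ hγ1 hγ2 hiIOSS αh hαh hKcont W δ σ1 hσ1
    γw γh tstar hγw hγh hcond
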